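/- (Equation (4.5) of the paper: the nonvanishing commutator of the adapted polar frame.) For every function F : ℂ^{n−1} × ℂ → ℂ of class C² in the real sense, all α, β = 1, …, n−1 and all (w,ζ) ∈ ℂ^{n−1} × ℂ: e_α(e_β̄(F))(w,ζ) − e_β̄(e_α(F))(w,ζ) = g_{αβ̄}(w)·(ζ·∂F/∂ζ(w,ζ) − ζ̄·∂F/∂ζ̄(w,ζ)); that is, [e_α, e_β̄] = g_{αβ̄}·(Z − Z̄) as first-order differential operators. -/

import Mathlib

noncomputable section

/-- Wirtinger derivative `∂f/∂u(a)` of `f` at `a` along the complex direction `e`: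
`(1/2)(Df(a)[e] − i·Df(a)[i·e])`, with `Df` the real Fréchet derivative. -/
def wirt {E : Type*} [NormedAddCommGroup E] [NormedSpace ℂ E]
    (f : E → ℂ) (a e : E) : ℂ :=
  (1 / 2) * (fderiv ℝ f a e - Complex.I * fderiv ℝ f a (Complex.I • e))

/-- Conjugate Wirtinger derivative `∂f/∂ū(a)` of `f` at `a` along the complex direction `e`:
`(1/2)(Df(a)[e] + i·Df(a)[i·e])`. -/
def wirtBar {E : Type*} [NormedAddCommGroup E] [NormedSpace ℂ E]
    (f : E → ℂ) (a e : E) : ℂ :=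
  (1 / 2) * (fderiv ℝ f a e + Complex.I * fderiv ℝ f a (Complex.I • e))

/-- `N(w) = 1 + Σ_γ |w^γ|²`. -/
def Nfun {m : ℕ} (w : Fin m → ℂ) : ℝ := 1 + ∑ γ, Complex.normSq (w γ)

/-- `L(w) = log(ρ(w)²) + log N(w)`. -/
def Lfun {m : ℕ} (ρ : (Fin m → ℂ) → ℝ) (w : Fin m → ℂ) : ℝ :=
  Real.log (ρ w ^ 2) + Real.log (Nfun w)

/-- `g_{αβ̄}(w) = ∂²L/∂w^α∂w̄^β(w)`. -/
def gfun {m : ℕ} (ρ : (Fin m → ℂ) → ℝ) (α β : Fin m) (w : Fin m → ℂ) : ℂ :=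
  wirt (fun w' => wirtBar (fun w'' => ((Lfun ρ w'' : ℝ) : ℂ)) w' (Pi.single β 1))
    w (Pi.single α 1)

/-- The operator `Z(F) = ζ·∂F/∂ζ` on functions of `(w, ζ) ∈ ℂ^m × ℂ`. -/
def Zop {m : ℕ} (F : (Fin m → ℂ) × ℂ → ℂ) (p : (Fin m → ℂ) × ℂ) : ℂ :=
  p.2 * wirt F p (0, 1)

/-- The operator `Z̄(F) = ζ̄·∂F/∂ζ̄`. -/
def ZbarOp {m : ℕ} (F : (Fin m → ℂ) × ℂ → ℂ) (p : (Fin m → ℂ) × ℂ) : ℂ :=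
  (starRingEnd ℂ) p.2 * wirtBar F p (0, 1)

/-- The adapted polar frame operator
`e_α(F) = ∂F/∂w^α − (∂(log ρ²)/∂w^α)·ζ·∂F/∂ζ + (1/2)(∂(log N)/∂w^α)·(ζ̄·∂F/∂ζ̄ − ζ·∂F/∂ζ)`. -/
def eOp {m : ℕ} (ρ : (Fin m → ℂ) → ℝ) (α : Fin m)
    (F : (Fin m → ℂ) × ℂ → ℂ) (p : (Fin m → ℂ) × ℂ) : ℂ :=
  wirt F p (Pi.single α 1, 0)
    - wirt (fun w => ((Real.log (ρ w ^ 2) : ℝ) : ℂ)) p.1 (Pi.single α 1)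
        * (p.2 * wirt F p (0, 1))
    + (1 / 2) * wirt (fun w => ((Real.log (Nfun w) : ℝ) : ℂ)) p.1 (Pi.single α 1)
        * ((starRingEnd ℂ) p.2 * wirtBar F p (0, 1) - p.2 * wirt F p (0, 1))

/-- The adapted polar frame operator
`e_ᾱ(F) = ∂F/∂w̄^α − (∂(log ρ²)/∂w̄^α)·ζ̄·∂F/∂ζ̄ + (1/2)(∂(log N)/∂w̄^α)·(ζ·∂F/∂ζ − ζ̄·∂F/∂ζ̄)`. -/
def eBarOp {m : ℕ} (ρ : (Fin m → ℂ) → ℝ) (α : Fin m)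
    (F : (Fin m → ℂ) × ℂ → ℂ) (p : (Fin m → ℂ) × ℂ) : ℂ :=
  wirtBar F p (Pi.single α 1, 0)
    - wirtBar (fun w => ((Real.log (ρ w ^ 2) : ℝ) : ℂ)) p.1 (Pi.single α 1)
        * ((starRingEnd ℂ) p.2 * wirtBar F p (0, 1))
    + (1 / 2) * wirtBar (fun w => ((Real.log (Nfun w) : ℝ) : ℂ)) p.1 (Pi.single α 1)
        * (p.2 * wirt F p (0, 1) - (starRingEnd ℂ) p.2 * wirtBar F p (0, 1))


/-! Each field of the adapted polar frame has the shape `D + c Z + c' Z̄`, with `D` a Wirtinger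
derivative in the `w`-directions and coefficients depending on `w` only. On `C²` functions the
operators `∂_u`, `∂̄_v`, `Z`, `Z̄` pairwise commute (symmetry of the second real derivative) and
`Z`, `Z̄` annihilate functions of `w`, so
`[∂_u + c Z + c' Z̄, ∂̄_v + d Z + d' Z̄] = (∂_u d − ∂̄_v c) Z + (∂_u d' − ∂̄_v c') Z̄`.
For the polar frame, `c = −∂_u(log ρ²) − ½ ∂_u log N`, `c' = ½ ∂_u log N`,
`d = ½ ∂̄_v log N`, `d' = −∂̄_v(log ρ²) − ½ ∂̄_v log N`; the two halves of `∂_u ∂̄_v log N`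
add up, and both brackets of coefficients equal `± ∂_u ∂̄_v L = ± g`. -/

section Wirtinger

variable {E : Type*} [NormedAddCommGroup E] [NormedSpace ℂ E] {f g : E → ℂ} {a : E}

lemma wirt_zero_dir (f : E → ℂ) (a : E) : wirt f a 0 = 0 := by simp [wirt]

lemma wirtBar_zero_dir (f : E → ℂ) (a : E) : wirtBar f a 0 = 0 := by simp [wirtBar]

lemma wirt_add (hf : DifferentiableAt ℝ f a) (hg : DifferentiableAt ℝ g a) (e : E) :
    wirt (fun x => f x + g x) a e = wirt f a e + wirt g a e := by
  simp only [wirt, fderiv_fun_add hf hg, add_apply]; ring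

lemma wirtBar_add (hf : DifferentiableAt ℝ f a) (hg : DifferentiableAt ℝ g a) (e : E) :
    wirtBar (fun x => f x + g x) a e = wirtBar f a e + wirtBar g a e := by
  simp only [wirtBar, fderiv_fun_add hf hg, add_apply]; ring

lemma wirt_neg (f : E → ℂ) (a e : E) : wirt (fun x => -f x) a e = -wirt f a e := by
  simp only [wirt, fderiv_fun_neg, neg_apply]; ring

lemma wirtBar_neg (f : E → ℂ) (a e : E) : wirtBar (fun x => -f x) a e = -wirtBar f a e := by
  simp only [wirtBar, fderiv_fun_neg, neg_apply]; ring

lemma wirt_const_mul (hf : DifferentiableAt ℝ f a) (c : ℂ) (e : E) :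
    wirt (fun x => c * f x) a e = c * wirt f a e := by
  simp only [wirt, fderiv_const_mul hf, smul_apply, smul_eq_mul]; ring

lemma wirtBar_const_mul (hf : DifferentiableAt ℝ f a) (c : ℂ) (e : E) :
    wirtBar (fun x => c * f x) a e = c * wirtBar f a e := by
  simp only [wirtBar, fderiv_const_mul hf, smul_apply, smul_eq_mul]; ring

lemma wirt_mul (hf : DifferentiableAt ℝ f a) (hg : DifferentiableAt ℝ g a) (e : E) :
    wirt (fun x => f x * g x) a e = wirt f a e * g a + f a * wirt g a e := by
  simp only [wirt, fderiv_fun_mul hf hg, add_apply, smul_apply, smul_eq_mul]; ring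

lemma wirtBar_mul (hf : DifferentiableAt ℝ f a) (hg : DifferentiableAt ℝ g a) (e : E) :
    wirtBar (fun x => f x * g x) a e = wirtBar f a e * g a + f a * wirtBar g a e := by
  simp only [wirtBar, fderiv_fun_mul hf hg, add_apply, smul_apply, smul_eq_mul]; ring

end Wirtinger

section SecondOrder

variable {E : Type*} [NormedAddCommGroup E] [NormedSpace ℂ E] {F : E → ℂ}

lemma differentiable_fderiv_of_contDiff_two (hF : ContDiff ℝ 2 F) :
    Differentiable ℝ (fderiv ℝ F) :=
  (hF.fderiv_right (m := 1) (by norm_num)).differentiable one_ne_zero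

lemma differentiable_fderiv_apply (hF : ContDiff ℝ 2 F) (v : E) :
    Differentiable ℝ (fun q => fderiv ℝ F q v) :=
  (differentiable_fderiv_of_contDiff_two hF).clm_apply (differentiable_const v)

lemma differentiable_wirt (hF : ContDiff ℝ 2 F) (v : E) :
    Differentiable ℝ (fun q => wirt F q v) :=
  ((differentiable_fderiv_apply hF v).sub
    ((differentiable_fderiv_apply hF (Complex.I • v)).const_mul Complex.I)).const_mul _

lemma differentiable_wirtBar (hF : ContDiff ℝ 2 F) (v : E) :
    Differentiable ℝ (fun q => wirtBar F q v) :=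
  ((differentiable_fderiv_apply hF v).add
    ((differentiable_fderiv_apply hF (Complex.I • v)).const_mul Complex.I)).const_mul _

lemma fderiv_wirt_apply (hF : ContDiff ℝ 2 F) (p u v : E) :
    fderiv ℝ (fun q => wirt F q v) p u = (1 / 2) * (fderiv ℝ (fderiv ℝ F) p u v
      - Complex.I * fderiv ℝ (fderiv ℝ F) p u (Complex.I • v)) := by
  have hd := differentiable_fderiv_of_contDiff_two hF p
  have hv := differentiable_fderiv_apply hF v p
  have hIv := differentiable_fderiv_apply hF (Complex.I • v) p
  rw [show (fun q => wirt F q v) = fun q => (1 / 2 : ℂ) * (fderiv ℝ F q v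
      - Complex.I * fderiv ℝ F q (Complex.I • v)) from rfl,
    fderiv_const_mul (hv.fun_sub (hIv.const_mul _)), fderiv_fun_sub hv (hIv.const_mul _),
    fderiv_const_mul hIv]
  simp [fderiv_clm_apply hd (differentiableAt_const _)]

lemma fderiv_wirtBar_apply (hF : ContDiff ℝ 2 F) (p u v : E) :
    fderiv ℝ (fun q => wirtBar F q v) p u = (1 / 2) * (fderiv ℝ (fderiv ℝ F) p u v
      + Complex.I * fderiv ℝ (fderiv ℝ F) p u (Complex.I • v)) := by
  have hd := differentiable_fderiv_of_contDiff_two hF p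
  have hv := differentiable_fderiv_apply hF v p
  have hIv := differentiable_fderiv_apply hF (Complex.I • v) p
  rw [show (fun q => wirtBar F q v) = fun q => (1 / 2 : ℂ) * (fderiv ℝ F q v
      + Complex.I * fderiv ℝ F q (Complex.I • v)) from rfl,
    fderiv_const_mul (hv.fun_add (hIv.const_mul _)), fderiv_fun_add hv (hIv.const_mul _),
    fderiv_const_mul hIv]
  simp [fderiv_clm_apply hd (differentiableAt_const _)]
  ring

lemma wirt_wirt_comm (hF : ContDiff ℝ 2 F) (p u v : E) :
    wirt (fun q => wirt F q v) p u = wirt (fun q => wirt F q u) p v := by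
  have hS := (hF.contDiffAt (x := p)).isSymmSndFDerivAt (by simp)
  rw [wirt.eq_1 (fun q => wirt F q v), wirt.eq_1 (fun q => wirt F q u),
    fderiv_wirt_apply hF, fderiv_wirt_apply hF, fderiv_wirt_apply hF, fderiv_wirt_apply hF,
    hS v u, hS v (Complex.I • u), hS (Complex.I • v) u, hS (Complex.I • v) (Complex.I • u)]
  ring

lemma wirt_wirtBar_comm (hF : ContDiff ℝ 2 F) (p u v : E) :
    wirt (fun q => wirtBar F q v) p u = wirtBar (fun q => wirt F q u) p v := by
  have hS := (hF.contDiffAt (x := p)).isSymmSndFDerivAt (by simp)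
  rw [wirt.eq_1 (fun q => wirtBar F q v), wirtBar.eq_1 (fun q => wirt F q u),
    fderiv_wirtBar_apply hF, fderiv_wirtBar_apply hF, fderiv_wirt_apply hF, fderiv_wirt_apply hF,
    hS v u, hS v (Complex.I • u), hS (Complex.I • v) u, hS (Complex.I • v) (Complex.I • u)]
  ring

lemma wirtBar_wirtBar_comm (hF : ContDiff ℝ 2 F) (p u v : E) :
    wirtBar (fun q => wirtBar F q v) p u = wirtBar (fun q => wirtBar F q u) p v := by
  have hS := (hF.contDiffAt (x := p)).isSymmSndFDerivAt (by simp)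
  rw [wirtBar.eq_1 (fun q => wirtBar F q v), wirtBar.eq_1 (fun q => wirtBar F q u),
    fderiv_wirtBar_apply hF, fderiv_wirtBar_apply hF, fderiv_wirtBar_apply hF,
    fderiv_wirtBar_apply hF,
    hS v u, hS v (Complex.I • u), hS (Complex.I • v) u, hS (Complex.I • v) (Complex.I • u)]
  ring

end SecondOrder

section Product

variable {E : Type*} [NormedAddCommGroup E] [NormedSpace ℂ E]

lemma wirt_comp_fst {c : E → ℂ} {p : E × ℂ} (hc : DifferentiableAt ℝ c p.1) (e : E × ℂ) :
    wirt (fun q : E × ℂ => c q.1) p e = wirt c p.1 e.1 := by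
  have hfst : fderiv ℝ (fun q : E × ℂ => c q.1) p = (fderiv ℝ c p.1).comp (.fst ℝ E ℂ) :=
    (hc.hasFDerivAt.comp p hasFDerivAt_fst).fderiv
  simp [wirt, hfst]

lemma wirtBar_comp_fst {c : E → ℂ} {p : E × ℂ} (hc : DifferentiableAt ℝ c p.1) (e : E × ℂ) :
    wirtBar (fun q : E × ℂ => c q.1) p e = wirtBar c p.1 e.1 := by
  have hfst : fderiv ℝ (fun q : E × ℂ => c q.1) p = (fderiv ℝ c p.1).comp (.fst ℝ E ℂ) :=
    (hc.hasFDerivAt.comp p hasFDerivAt_fst).fderiv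
  simp [wirtBar, hfst]

lemma wirt_snd (p e : E × ℂ) : wirt (fun q : E × ℂ => q.2) p e = e.2 := by
  simp [wirt, hasFDerivAt_snd.fderiv]
  linear_combination (-(1 / 2) * e.2) * Complex.I_sq

lemma wirtBar_snd (p e : E × ℂ) : wirtBar (fun q : E × ℂ => q.2) p e = 0 := by
  simp [wirtBar, hasFDerivAt_snd.fderiv]
  linear_combination e.2 * Complex.I_sq

lemma wirt_conj_snd (p e : E × ℂ) : wirt (fun q : E × ℂ => (starRingEnd ℂ) q.2) p e = 0 := by
  have hconj : fderiv ℝ (fun q : E × ℂ => (starRingEnd ℂ) q.2) p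
      = Complex.conjCLE.toContinuousLinearMap.comp (.snd ℝ E ℂ) :=
    (Complex.conjCLE.toContinuousLinearMap.hasFDerivAt.comp p hasFDerivAt_snd).fderiv
  simp [wirt, hconj]
  linear_combination (starRingEnd ℂ) e.2 * Complex.I_sq

lemma wirtBar_conj_snd (p e : E × ℂ) :
    wirtBar (fun q : E × ℂ => (starRingEnd ℂ) q.2) p e = (starRingEnd ℂ) e.2 := by
  have hconj : fderiv ℝ (fun q : E × ℂ => (starRingEnd ℂ) q.2) p
      = Complex.conjCLE.toContinuousLinearMap.comp (.snd ℝ E ℂ) :=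
    (Complex.conjCLE.toContinuousLinearMap.hasFDerivAt.comp p hasFDerivAt_snd).fderiv
  simp [wirtBar, hconj]
  linear_combination (-(1 / 2) * (starRingEnd ℂ) e.2) * Complex.I_sq

lemma differentiable_conj_snd : Differentiable ℝ (fun q : E × ℂ => (starRingEnd ℂ) q.2) :=
  Complex.conjCLE.toContinuousLinearMap.differentiable.comp differentiable_snd

end Product

section PolarFrame

variable {m : ℕ} {F G : (Fin m → ℂ) × ℂ → ℂ}

lemma differentiable_Zop (hF : ContDiff ℝ 2 F) : Differentiable ℝ (Zop F) :=
  differentiable_snd.mul (differentiable_wirt hF _)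

lemma differentiable_ZbarOp (hF : ContDiff ℝ 2 F) : Differentiable ℝ (ZbarOp F) :=
  differentiable_conj_snd.mul (differentiable_wirtBar hF _)

lemma wirt_Zop (hF : ContDiff ℝ 2 F) (p e : (Fin m → ℂ) × ℂ) :
    wirt (Zop F) p e = e.2 * wirt F p (0, 1) + Zop (fun q => wirt F q e) p := by
  rw [show Zop F = fun q => q.2 * wirt F q (0, 1) from rfl,
    wirt_mul differentiableAt_snd (differentiable_wirt hF _ p), wirt_snd, wirt_wirt_comm hF]
  rfl

lemma wirtBar_Zop (hF : ContDiff ℝ 2 F) (p e : (Fin m → ℂ) × ℂ) :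
    wirtBar (Zop F) p e = Zop (fun q => wirtBar F q e) p := by
  rw [show Zop F = fun q => q.2 * wirt F q (0, 1) from rfl,
    wirtBar_mul differentiableAt_snd (differentiable_wirt hF _ p), wirtBar_snd,
    ← wirt_wirtBar_comm hF, zero_mul, zero_add]
  rfl

lemma wirt_ZbarOp (hF : ContDiff ℝ 2 F) (p e : (Fin m → ℂ) × ℂ) :
    wirt (ZbarOp F) p e = ZbarOp (fun q => wirt F q e) p := by
  rw [show ZbarOp F = fun q => (starRingEnd ℂ) q.2 * wirtBar F q (0, 1) from rfl,
    wirt_mul (differentiable_conj_snd p) (differentiable_wirtBar hF _ p), wirt_conj_snd,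
    wirt_wirtBar_comm hF, zero_mul, zero_add]
  rfl

lemma wirtBar_ZbarOp (hF : ContDiff ℝ 2 F) (p e : (Fin m → ℂ) × ℂ) :
    wirtBar (ZbarOp F) p e
      = (starRingEnd ℂ) e.2 * wirtBar F p (0, 1) + ZbarOp (fun q => wirtBar F q e) p := by
  rw [show ZbarOp F = fun q => (starRingEnd ℂ) q.2 * wirtBar F q (0, 1) from rfl,
    wirtBar_mul (differentiable_conj_snd p) (differentiable_wirtBar hF _ p), wirtBar_conj_snd,
    wirtBar_wirtBar_comm hF]
  rfl

lemma Zop_ZbarOp_comm (hF : ContDiff ℝ 2 F) (p : (Fin m → ℂ) × ℂ) :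
    Zop (ZbarOp F) p = ZbarOp (Zop F) p := by
  rw [Zop, ZbarOp, wirt_ZbarOp hF, wirtBar_Zop hF, Zop, ZbarOp, wirt_wirtBar_comm hF]
  ring

def frameOp (D : ((Fin m → ℂ) × ℂ → ℂ) → (Fin m → ℂ) × ℂ → ℂ) (c c' : (Fin m → ℂ) → ℂ)
    (G : (Fin m → ℂ) × ℂ → ℂ) (p : (Fin m → ℂ) × ℂ) : ℂ :=
  D G p + c p.1 * Zop G p + c' p.1 * ZbarOp G p

variable {D : ((Fin m → ℂ) × ℂ → ℂ) → (Fin m → ℂ) × ℂ → ℂ} {c c' : (Fin m → ℂ) → ℂ}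

lemma wirt_frameOp (hG : ContDiff ℝ 2 G) (hD : Differentiable ℝ (D G))
    (hc : Differentiable ℝ c) (hc' : Differentiable ℝ c') (p e : (Fin m → ℂ) × ℂ) :
    wirt (frameOp D c c' G) p e
      = wirt (D G) p e + (wirt c p.1 e.1 * Zop G p + c p.1 * wirt (Zop G) p e)
        + (wirt c' p.1 e.1 * ZbarOp G p + c' p.1 * wirt (ZbarOp G) p e) := by
  have hc₁ : Differentiable ℝ fun q : (Fin m → ℂ) × ℂ => c q.1 := hc.comp differentiable_fst
  have hc'₁ : Differentiable ℝ fun q : (Fin m → ℂ) × ℂ => c' q.1 := hc'.comp differentiable_fst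
  have hcZ := hc₁.fun_mul (differentiable_Zop hG)
  have hcZbar := hc'₁.fun_mul (differentiable_ZbarOp hG)
  rw [show frameOp D c c' G = fun q => D G q + c q.1 * Zop G q + c' q.1 * ZbarOp G q from rfl,
    wirt_add ((hD p).fun_add (hcZ p)) (hcZbar p), wirt_add (hD p) (hcZ p),
    wirt_mul (hc₁ p) (differentiable_Zop hG p), wirt_mul (hc'₁ p) (differentiable_ZbarOp hG p),
    wirt_comp_fst (hc p.1), wirt_comp_fst (hc' p.1)]

lemma wirtBar_frameOp (hG : ContDiff ℝ 2 G) (hD : Differentiable ℝ (D G))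
    (hc : Differentiable ℝ c) (hc' : Differentiable ℝ c') (p e : (Fin m → ℂ) × ℂ) :
    wirtBar (frameOp D c c' G) p e
      = wirtBar (D G) p e + (wirtBar c p.1 e.1 * Zop G p + c p.1 * wirtBar (Zop G) p e)
        + (wirtBar c' p.1 e.1 * ZbarOp G p + c' p.1 * wirtBar (ZbarOp G) p e) := by
  have hc₁ : Differentiable ℝ fun q : (Fin m → ℂ) × ℂ => c q.1 := hc.comp differentiable_fst
  have hc'₁ : Differentiable ℝ fun q : (Fin m → ℂ) × ℂ => c' q.1 := hc'.comp differentiable_fst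
  have hcZ := hc₁.fun_mul (differentiable_Zop hG)
  have hcZbar := hc'₁.fun_mul (differentiable_ZbarOp hG)
  rw [show frameOp D c c' G = fun q => D G q + c q.1 * Zop G q + c' q.1 * ZbarOp G q from rfl,
    wirtBar_add ((hD p).fun_add (hcZ p)) (hcZbar p), wirtBar_add (hD p) (hcZ p),
    wirtBar_mul (hc₁ p) (differentiable_Zop hG p),
    wirtBar_mul (hc'₁ p) (differentiable_ZbarOp hG p),
    wirtBar_comp_fst (hc p.1), wirtBar_comp_fst (hc' p.1)]

lemma Zop_frameOp (hG : ContDiff ℝ 2 G) (hD : Differentiable ℝ (D G))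
    (hc : Differentiable ℝ c) (hc' : Differentiable ℝ c') (p : (Fin m → ℂ) × ℂ) :
    Zop (frameOp D c c' G) p
      = Zop (D G) p + c p.1 * Zop (Zop G) p + c' p.1 * Zop (ZbarOp G) p := by
  simp only [Zop.eq_1 (frameOp D c c' G), wirt_frameOp hG hD hc hc', wirt_zero_dir]
  simp only [Zop]
  ring

lemma ZbarOp_frameOp (hG : ContDiff ℝ 2 G) (hD : Differentiable ℝ (D G))
    (hc : Differentiable ℝ c) (hc' : Differentiable ℝ c') (p : (Fin m → ℂ) × ℂ) :
    ZbarOp (frameOp D c c' G) p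
      = ZbarOp (D G) p + c p.1 * ZbarOp (Zop G) p + c' p.1 * ZbarOp (ZbarOp G) p := by
  simp only [ZbarOp.eq_1 (frameOp D c c' G), wirtBar_frameOp hG hD hc hc', wirtBar_zero_dir]
  simp only [ZbarOp]
  ring

theorem frameOp_commutator {d d' : (Fin m → ℂ) → ℂ} (hF : ContDiff ℝ 2 F)
    (hc : Differentiable ℝ c) (hc' : Differentiable ℝ c')
    (hd : Differentiable ℝ d) (hd' : Differentiable ℝ d') (u v : Fin m → ℂ)
    (p : (Fin m → ℂ) × ℂ) :
    frameOp (fun G q => wirt G q (u, 0)) c c'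
        (frameOp (fun G q => wirtBar G q (v, 0)) d d' F) p
      - frameOp (fun G q => wirtBar G q (v, 0)) d d'
        (frameOp (fun G q => wirt G q (u, 0)) c c' F) p
      = (wirt d p.1 u - wirtBar c p.1 v) * Zop F p
        + (wirt d' p.1 u - wirtBar c' p.1 v) * ZbarOp F p := by
  set D : ((Fin m → ℂ) × ℂ → ℂ) → (Fin m → ℂ) × ℂ → ℂ := fun G q => wirt G q (u, 0)
  set D' : ((Fin m → ℂ) × ℂ → ℂ) → (Fin m → ℂ) × ℂ → ℂ := fun G q => wirtBar G q (v, 0)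
  have hDF : Differentiable ℝ (D F) := differentiable_wirt hF (u, 0)
  have hD'F : Differentiable ℝ (D' F) := differentiable_wirtBar hF (v, 0)
  change wirt (frameOp D' d d' F) p (u, 0) + c p.1 * Zop (frameOp D' d d' F) p
      + c' p.1 * ZbarOp (frameOp D' d d' F) p
    - (wirtBar (frameOp D c c' F) p (v, 0) + d p.1 * Zop (frameOp D c c' F) p
      + d' p.1 * ZbarOp (frameOp D c c' F) p) = _
  rw [wirt_frameOp hF hD'F hd hd', wirtBar_frameOp hF hDF hc hc',
    Zop_frameOp hF hD'F hd hd', ZbarOp_frameOp hF hD'F hd hd',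
    Zop_frameOp hF hDF hc hc', ZbarOp_frameOp hF hDF hc hc']
  simp only [D, D', wirt_Zop hF, wirt_ZbarOp hF, wirtBar_Zop hF, wirtBar_ZbarOp hF,
    Zop_ZbarOp_comm hF, wirt_wirtBar_comm hF, map_zero, zero_mul, zero_add]
  ring

theorem frameOp_polar_commutator {P Q : (Fin m → ℂ) → ℂ} (hP : ContDiff ℝ 2 P)
    (hQ : ContDiff ℝ 2 Q) (hF : ContDiff ℝ 2 F) (a b : Fin m → ℂ) (p : (Fin m → ℂ) × ℂ) :
    frameOp (fun G q => wirt G q (a, 0)) (fun w => -(wirt P w a + 1 / 2 * wirt Q w a))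
        (fun w => 1 / 2 * wirt Q w a)
        (frameOp (fun G q => wirtBar G q (b, 0)) (fun w => 1 / 2 * wirtBar Q w b)
          (fun w => -(wirtBar P w b + 1 / 2 * wirtBar Q w b)) F) p
      - frameOp (fun G q => wirtBar G q (b, 0)) (fun w => 1 / 2 * wirtBar Q w b)
        (fun w => -(wirtBar P w b + 1 / 2 * wirtBar Q w b))
        (frameOp (fun G q => wirt G q (a, 0)) (fun w => -(wirt P w a + 1 / 2 * wirt Q w a))
          (fun w => 1 / 2 * wirt Q w a) F) p
      = wirt (fun w => wirtBar (fun x => P x + Q x) w b) p.1 a * (Zop F p - ZbarOp F p) := by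
  have hPa := differentiable_wirt hP a
  have hQa := differentiable_wirt hQ a
  have hPb := differentiable_wirtBar hP b
  have hQb := differentiable_wirtBar hQ b
  have hsum : (fun w => wirtBar (fun x => P x + Q x) w b)
      = fun w => wirtBar P w b + wirtBar Q w b :=
    funext fun w => wirtBar_add (hP.differentiable two_ne_zero w)
      (hQ.differentiable two_ne_zero w) b
  have hc : Differentiable ℝ fun w => -(wirt P w a + 1 / 2 * wirt Q w a) :=
    (hPa.add (hQa.const_mul _)).neg
  have hd' : Differentiable ℝ fun w => -(wirtBar P w b + 1 / 2 * wirtBar Q w b) :=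
    (hPb.add (hQb.const_mul _)).neg
  rw [frameOp_commutator hF hc (hQa.const_mul _) (hQb.const_mul _) hd', hsum,
    wirtBar_neg, wirtBar_add (hPa _) (hQa.const_mul _ _), wirt_neg,
    wirt_add (hPb _) (hQb.const_mul _ _), wirt_const_mul (hQb _), wirtBar_const_mul (hQa _),
    wirt_add (hPb _) (hQb _), ← wirt_wirtBar_comm hP, ← wirt_wirtBar_comm hQ]
  ring

end PolarFrame

lemma contDiff_Nfun {m : ℕ} {n : WithTop ℕ∞} : ContDiff ℝ n (Nfun (m := m)) := by
  have hN : Nfun (m := m) = fun w => 1 + ∑ γ, ‖w γ‖ ^ 2 := by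
    funext w
    simp [Nfun, Complex.normSq_eq_norm_sq]
  rw [hN]
  exact contDiff_const.add (ContDiff.sum fun γ _ => (contDiff_apply ℝ ℂ γ).norm_sq ℝ)

lemma Nfun_pos {m : ℕ} (w : Fin m → ℂ) : 0 < Nfun w :=
  add_pos_of_pos_of_nonneg one_pos (Finset.sum_nonneg fun _ _ => Complex.normSq_nonneg _)

lemma eOp_eq_frameOp {m : ℕ} (ρ : (Fin m → ℂ) → ℝ) (α : Fin m) :
    eOp ρ α = frameOp (fun G q => wirt G q (Pi.single α 1, 0))
      (fun w => -(wirt (fun x => ((Real.log (ρ x ^ 2) : ℝ) : ℂ)) w (Pi.single α 1)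
        + 1 / 2 * wirt (fun x => ((Real.log (Nfun x) : ℝ) : ℂ)) w (Pi.single α 1)))
      (fun w => 1 / 2 * wirt (fun x => ((Real.log (Nfun x) : ℝ) : ℂ)) w (Pi.single α 1)) := by
  funext F p
  simp only [eOp, frameOp, Zop, ZbarOp]
  ring

lemma eBarOp_eq_frameOp {m : ℕ} (ρ : (Fin m → ℂ) → ℝ) (β : Fin m) :
    eBarOp ρ β = frameOp (fun G q => wirtBar G q (Pi.single β 1, 0))
      (fun w => 1 / 2 * wirtBar (fun x => ((Real.log (Nfun x) : ℝ) : ℂ)) w (Pi.single β 1))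
      (fun w => -(wirtBar (fun x => ((Real.log (ρ x ^ 2) : ℝ) : ℂ)) w (Pi.single β 1)
        + 1 / 2 * wirtBar (fun x => ((Real.log (Nfun x) : ℝ) : ℂ)) w (Pi.single β 1))) := by
  funext F p
  simp only [eBarOp, frameOp, Zop, ZbarOp]
  ring

theorem statement12_general (m : ℕ) (ρ : (Fin m → ℂ) → ℝ)
    (hρpos : ∀ w, 0 < ρ w) (hρ : ContDiff ℝ 2 ρ)
    (F : (Fin m → ℂ) × ℂ → ℂ) (hF : ContDiff ℝ 2 F) :
    ∀ (α β : Fin m) (w : Fin m → ℂ) (ζ : ℂ),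
      eOp ρ α (eBarOp ρ β F) (w, ζ) - eBarOp ρ β (eOp ρ α F) (w, ζ)
        = gfun ρ α β w * (ζ * wirt F (w, ζ) (0, 1)
            - (starRingEnd ℂ) ζ * wirtBar F (w, ζ) (0, 1)) := by
  intro α β w ζ
  have hP : ContDiff ℝ 2 fun w : Fin m → ℂ => ((Real.log (ρ w ^ 2) : ℝ) : ℂ) :=
    Complex.ofRealCLM.contDiff.comp ((hρ.pow 2).log fun w => (pow_pos (hρpos w) 2).ne')
  have hQ : ContDiff ℝ 2 fun w : Fin m → ℂ => ((Real.log (Nfun w) : ℝ) : ℂ) :=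
    Complex.ofRealCLM.contDiff.comp (contDiff_Nfun.log fun w => (Nfun_pos w).ne')
  have hL : (fun w => ((Lfun ρ w : ℝ) : ℂ))
      = fun w => ((Real.log (ρ w ^ 2) : ℝ) : ℂ) + ((Real.log (Nfun w) : ℝ) : ℂ) := by
    funext w
    simp [Lfun]
  rw [eOp_eq_frameOp, eBarOp_eq_frameOp, gfun, hL]
  exact frameOp_polar_commutator hP hQ hF _ _ (w, ζ)

/-- **Equation (4.5): the nonvanishing commutator of the adapted polar frame.** For any `C²`
function `F : ℂ^m × ℂ → ℂ` and all `α, β`: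
`e_α(e_β̄(F)) − e_β̄(e_α(F)) = g_{αβ̄}·(Z(F) − Z̄(F))`, i.e. `[e_α, e_β̄] = g_{αβ̄}(Z − Z̄)`.
Here `ℂ^{n−1} = ℂ^m` with `m = n − 1 ≥ 1`. -/
theorem statement12 (m : ℕ) (hm : 1 ≤ m) (ρ : (Fin m → ℂ) → ℝ)
    (hρpos : ∀ w, 0 < ρ w) (hρ : ContDiff ℝ 2 ρ)
    (F : (Fin m → ℂ) × ℂ → ℂ) (hF : ContDiff ℝ 2 F) :
    ∀ (α β : Fin m) (w : Fin m → ℂ) (ζ : ℂ),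
      eOp ρ α (eBarOp ρ β F) (w, ζ) - eBarOp ρ β (eOp ρ α F) (w, ζ)
        = gfun ρ α β w * (ζ * wirt F (w, ζ) (0, 1)
            - (starRingEnd ℂ) ζ * wirtBar F (w, ζ) (0, 1)) :=
  statement12_general m ρ hρpos hρ F hF

end
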